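/- arXiv:1808.02838 — 3 statements merged into one kernel-verified Lean document; each statement's English description precedes it below -/
import Mathlib

section
/- Proposition (lower bound on expected computing time): Let B ≥ 1, λ > 0, and let r : Fin B → ℝ be any vector of strictly positive rates with ∑_i r i = N. Let μ_r be the product measure on (Fin B → ℝ) whose i-th factor is the exponential distribution with rate λ · r i, and let T(r) = ∫ (sup_i x i) dμ_r(x). Then T(r) ≥ (B/(N λ)) · H_B, where H_B = ∑_{k=1}^{B} 1/k is the B-th harmonic number, with equality for the balanced assignment in which every entry of r equals N/B. -/
open Finset MeasureTheory ProbabilityTheory Real Set Filter Topology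

/-! By the layer-cake formula, the expected maximum of independent exponentials with rates `a i`
is `∫₀^∞ (1 - ∏ i, (1 - exp (-(a i * t)))) dt`. Applying AM-GM to the factors `1 - exp (-x i)`
and Jensen's inequality for `exp` to the `exp (-x i)` gives
`∏ i, (1 - exp (-x i)) ≤ (1 - exp (-x̄))^B` with `x̄` the mean of the `x i`, so the integrand is
pointwise smallest for the balanced rates. For a common rate `c`, the telescoping identity
`1 - (1 - u)^B = ∑ k < B, u (1 - u)^k` with `u = exp (-(c * t))` turns the integral into
`∑ k < B, 1 / (c (k + 1)) = H_B / c`. -/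

theorem prod_le_mean_pow {ι : Type*} (s : Finset ι) {z : ι → ℝ} (hz : ∀ i ∈ s, 0 ≤ z i) :
    ∏ i ∈ s, z i ≤ ((∑ i ∈ s, z i) / #s) ^ #s := by
  rcases s.eq_empty_or_nonempty with rfl | hs
  · simp
  have hcard : (0 : ℝ) < #s := by exact_mod_cast hs.card_pos
  have hgm := geom_mean_le_arith_mean s (fun _ => 1) z (fun _ _ => zero_le_one)
    (by simpa using hcard) hz
  simp only [rpow_one, sum_const, nsmul_eq_mul, mul_one, one_mul] at hgm
  calc ∏ i ∈ s, z i = ((∏ i ∈ s, z i) ^ (#s : ℝ)⁻¹) ^ #s := by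
        rw [← rpow_natCast, ← rpow_mul (prod_nonneg hz), inv_mul_cancel₀ hcard.ne', rpow_one]
    _ ≤ ((∑ i ∈ s, z i) / #s) ^ #s :=
        pow_le_pow_left₀ (rpow_nonneg (prod_nonneg hz) _) hgm _

theorem prod_one_sub_exp_neg_le {ι : Type*} {s : Finset ι} (hs : s.Nonempty) {x : ι → ℝ}
    (hx : ∀ i ∈ s, 0 ≤ x i) :
    ∏ i ∈ s, (1 - exp (-x i)) ≤ (1 - exp (-((∑ i ∈ s, x i) / #s))) ^ #s := by
  have hcard : (0 : ℝ) < #s := by exact_mod_cast hs.card_pos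
  have hz : ∀ i ∈ s, 0 ≤ 1 - exp (-x i) := fun i hi => by simpa using hx i hi
  have hjensen : exp (-((∑ i ∈ s, x i) / #s)) ≤ (∑ i ∈ s, exp (-x i)) / #s := by
    have := convexOn_exp.map_sum_le (t := s) (w := fun _ => (#s : ℝ)⁻¹) (p := fun i => -x i)
      (fun _ _ => by positivity) (by simp [hcard.ne']) (fun _ _ => mem_univ _)
    simp only [smul_eq_mul, ← mul_sum, sum_neg_distrib] at this
    rwa [inv_mul_eq_div, inv_mul_eq_div, neg_div] at this
  have hmean : (∑ i ∈ s, (1 - exp (-x i))) / #s = 1 - (∑ i ∈ s, exp (-x i)) / #s := by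
    rw [sum_sub_distrib, sum_const, nsmul_one, sub_div, div_self hcard.ne']
  calc ∏ i ∈ s, (1 - exp (-x i)) ≤ ((∑ i ∈ s, (1 - exp (-x i))) / #s) ^ #s :=
        prod_le_mean_pow s hz
    _ ≤ (1 - exp (-((∑ i ∈ s, x i) / #s))) ^ #s := by
        gcongr
        · exact div_nonneg (sum_nonneg hz) hcard.le
        · linarith

theorem hasDerivAt_one_sub_exp_neg_mul_pow_div {c : ℝ} (hc : 0 < c) (n : ℕ) (t : ℝ) :
    HasDerivAt (fun t => (1 - exp (-(c * t))) ^ (n + 1) / (c * (n + 1)))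
      (exp (-(c * t)) * (1 - exp (-(c * t))) ^ n) t := by
  have hg : HasDerivAt (fun t => 1 - exp (-(c * t))) (c * exp (-(c * t))) t := by
    simpa [mul_comm] using (((hasDerivAt_id t).const_mul c).neg.exp).const_sub 1
  refine ((hg.pow (n + 1)).div_const (c * (n + 1))).congr_deriv ?_
  field_simp
  push_cast
  ring

theorem tendsto_one_sub_exp_neg_mul_pow_div {c : ℝ} (hc : 0 < c) (n : ℕ) :
    Tendsto (fun t => (1 - exp (-(c * t))) ^ (n + 1) / (c * (n + 1))) atTop
      (𝓝 (1 / (c * (n + 1)))) := by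
  have hexp : Tendsto (fun t => exp (-(c * t))) atTop (𝓝 0) :=
    tendsto_exp_neg_atTop_nhds_zero.comp (tendsto_id.const_mul_atTop hc)
  simpa using ((hexp.const_sub 1).pow (n + 1)).div_const (c * (n + 1))

theorem exp_neg_mul_mul_one_sub_pow_nonneg {c : ℝ} (hc : 0 < c) (n : ℕ) {t : ℝ} (ht : 0 ≤ t) :
    0 ≤ exp (-(c * t)) * (1 - exp (-(c * t))) ^ n := by
  have : 0 ≤ 1 - exp (-(c * t)) := by simpa using mul_nonneg hc.le ht
  positivity

theorem integrableOn_exp_neg_mul_mul_one_sub_pow {c : ℝ} (hc : 0 < c) (n : ℕ) :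
    IntegrableOn (fun t => exp (-(c * t)) * (1 - exp (-(c * t))) ^ n) (Ioi 0) :=
  integrableOn_Ioi_deriv_of_nonneg' (fun t _ => hasDerivAt_one_sub_exp_neg_mul_pow_div hc n t)
    (fun _ ht => exp_neg_mul_mul_one_sub_pow_nonneg hc n (le_of_lt ht))
    (tendsto_one_sub_exp_neg_mul_pow_div hc n)

theorem integral_exp_neg_mul_mul_one_sub_pow {c : ℝ} (hc : 0 < c) (n : ℕ) :
    ∫ t in Ioi (0 : ℝ), exp (-(c * t)) * (1 - exp (-(c * t))) ^ n = 1 / (c * (n + 1)) := by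
  rw [integral_Ioi_of_hasDerivAt_of_nonneg'
    (fun t _ => hasDerivAt_one_sub_exp_neg_mul_pow_div hc n t)
    (fun _ ht => exp_neg_mul_mul_one_sub_pow_nonneg hc n (le_of_lt ht))
    (tendsto_one_sub_exp_neg_mul_pow_div hc n)]
  simp

theorem one_sub_one_sub_pow_eq_sum {R : Type*} [CommRing R] (x : R) (n : ℕ) :
    1 - (1 - x) ^ n = ∑ k ∈ range n, x * (1 - x) ^ k := by
  have := geom_sum_mul_neg (1 - x) n
  rw [sub_sub_cancel] at this
  rw [← mul_sum, mul_comm, this]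

theorem sum_range_one_div_mul_succ (c : ℝ) (n : ℕ) :
    ∑ k ∈ range n, 1 / (c * (k + 1)) = (∑ k ∈ Icc 1 n, (1 : ℝ) / k) / c := by
  rw [sum_div, ← Finset.Ico_add_one_right_eq_Icc,
    ← sum_Ico_add' (fun k : ℕ => 1 / (k : ℝ) / c) 0 n 1, ← range_eq_Ico]
  refine sum_congr rfl fun k _ => ?_
  push_cast
  rw [div_div, mul_comm]

theorem integrableOn_one_sub_one_sub_exp_neg_mul_pow {c : ℝ} (hc : 0 < c) (n : ℕ) :
    IntegrableOn (fun t => 1 - (1 - exp (-(c * t))) ^ n) (Ioi 0) := by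
  simp only [one_sub_one_sub_pow_eq_sum]
  exact integrable_finsetSum _ fun k _ => integrableOn_exp_neg_mul_mul_one_sub_pow hc k

theorem integral_one_sub_one_sub_exp_neg_mul_pow {c : ℝ} (hc : 0 < c) (n : ℕ) :
    ∫ t in Ioi (0 : ℝ), 1 - (1 - exp (-(c * t))) ^ n = (∑ k ∈ Icc 1 n, (1 : ℝ) / k) / c := by
  simp only [one_sub_one_sub_pow_eq_sum]
  rw [integral_finsetSum _ fun k _ => integrableOn_exp_neg_mul_mul_one_sub_pow hc k]
  simp only [integral_exp_neg_mul_mul_one_sub_pow hc]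
  exact sum_range_one_div_mul_succ c n

theorem integrable_of_integrableOn_measureReal_lt {α : Type*} [MeasurableSpace α] {μ : Measure α}
    [IsFiniteMeasure μ] {f : α → ℝ} (hf_nn : 0 ≤ᵐ[μ] f) (hf : AEMeasurable f μ)
    (htail : IntegrableOn (fun t => μ.real {a | t < f a}) (Ioi 0)) : Integrable f μ := by
  refine ⟨hf.aestronglyMeasurable, ?_⟩
  rw [hasFiniteIntegral_iff_ofReal hf_nn, lintegral_eq_lintegral_meas_lt μ hf_nn hf]
  convert (hasFiniteIntegral_iff_ofReal (ae_of_all _ fun t => measureReal_nonneg)).mp htail.2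
    using 3 with t
  exact (ofReal_measureReal (measure_ne_top μ _)).symm

theorem measureReal_lt_iSup_pi {ι : Type*} [Fintype ι] [Nonempty ι] (ν : ι → Measure ℝ)
    [∀ i, IsProbabilityMeasure (ν i)] (t : ℝ) :
    (Measure.pi ν).real {x | t < ⨆ i, x i} = 1 - ∏ i, cdf (ν i) t := by
  have hset : {x : ι → ℝ | t < ⨆ i, x i} = (univ.pi fun _ => Iic t)ᶜ := by
    ext x
    simp only [Set.mem_ofPred_eq, mem_compl_iff, Set.mem_pi, mem_univ, forall_const, Set.mem_Iic,
      not_forall, not_le]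
    exact lt_ciSup_iff (finite_range x).bddAbove
  rw [hset, probReal_compl_eq_one_sub (.univ_pi fun _ => measurableSet_Iic), measureReal_def,
    Measure.pi_pi, ENNReal.toReal_prod]
  simp only [cdf_eq_real, measureReal_def]

theorem ae_nonneg_expMeasure {r : ℝ} (hr : 0 < r) : ∀ᵐ y ∂expMeasure r, 0 ≤ y := by
  have := isProbabilityMeasure_expMeasure hr
  refine measure_mono_null (fun y (hy : ¬0 ≤ y) => Set.mem_Iic.mpr (not_le.mp hy).le) ?_
  rw [← ofReal_cdf, cdf_expMeasure_eq hr]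
  simp

theorem ae_nonneg_iSup_pi {ι : Type*} [Fintype ι] [Nonempty ι] {ν : ι → Measure ℝ}
    [∀ i, SigmaFinite (ν i)] (hν : ∀ i, ∀ᵐ y ∂ν i, 0 ≤ y) :
    0 ≤ᵐ[Measure.pi ν] fun x => ⨆ i, x i := by
  filter_upwards [Measure.ae_pi_le_pi (Filter.eventually_pi hν)] with x hx
  exact (hx (Classical.arbitrary ι)).trans (le_ciSup (finite_range x).bddAbove _)

section Exponential

variable {ι : Type*} [Fintype ι] [Nonempty ι] {a : ι → ℝ}

theorem prod_one_sub_exp_neg_mul_le (ha : ∀ i, 0 ≤ a i) {t : ℝ} (ht : 0 ≤ t) :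
    ∏ i, (1 - exp (-(a i * t)))
      ≤ (1 - exp (-((∑ i, a i) / Fintype.card ι * t))) ^ Fintype.card ι := by
  have h := prod_one_sub_exp_neg_le univ_nonempty fun i _ => mul_nonneg (ha i) ht
  rwa [← card_univ, div_mul_eq_mul_div, sum_mul]

theorem integrableOn_one_sub_prod_one_sub_exp_neg_mul (ha : ∀ i, 0 < a i) :
    IntegrableOn (fun t => 1 - ∏ i, (1 - exp (-(a i * t)))) (Ioi 0) := by
  obtain ⟨i₀, hi₀⟩ := Finite.exists_min a
  refine (integrableOn_one_sub_one_sub_exp_neg_mul_pow (ha i₀) (Fintype.card ι)).mono'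
    (by fun_prop) ?_
  filter_upwards [ae_restrict_mem measurableSet_Ioi] with t (ht : 0 < t)
  have hfactor : ∀ i, 0 ≤ 1 - exp (-(a i * t)) ∧ 1 - exp (-(a i * t)) ≤ 1 := fun i =>
    ⟨by simpa using mul_nonneg (ha i).le ht.le, by linarith [exp_pos (-(a i * t))]⟩
  have hlower : (1 - exp (-(a i₀ * t))) ^ Fintype.card ι ≤ ∏ i, (1 - exp (-(a i * t))) := by
    rw [← card_univ, ← prod_const]
    refine prod_le_prod (fun i _ => (hfactor i₀).1) fun i _ => ?_
    gcongr
    exact hi₀ i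
  have hupper : ∏ i, (1 - exp (-(a i * t))) ≤ 1 :=
    prod_le_one (fun i _ => (hfactor i).1) fun i _ => (hfactor i).2
  rw [norm_of_nonneg (by linarith)]
  linarith

theorem integral_iSup_pi_expMeasure (ha : ∀ i, 0 < a i) :
    ∫ x, (⨆ i, x i) ∂Measure.pi (fun i => expMeasure (a i))
      = ∫ t in Ioi 0, 1 - ∏ i, (1 - exp (-(a i * t))) := by
  have := fun i => isProbabilityMeasure_expMeasure (ha i)
  have htail : ∀ t ∈ Ioi (0 : ℝ), (Measure.pi fun i => expMeasure (a i)).real {x | t < ⨆ i, x i}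
      = 1 - ∏ i, (1 - exp (-(a i * t))) := fun t ht => by
    simp [measureReal_lt_iSup_pi, cdf_expMeasure_eq (ha _), (mem_Ioi.mp ht).le]
  have hnn := ae_nonneg_iSup_pi fun i => ae_nonneg_expMeasure (ha i)
  have hint := integrable_of_integrableOn_measureReal_lt hnn
    (Measurable.iSup measurable_pi_apply).aemeasurable
    ((integrableOn_one_sub_prod_one_sub_exp_neg_mul ha).congr_fun (fun t ht => (htail t ht).symm)
      measurableSet_Ioi)
  rw [hint.integral_eq_integral_meas_lt hnn]
  exact setIntegral_congr_fun measurableSet_Ioi htail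

end Exponential

/-- Lower bound on the expected computing time: for any positive batch assignment
`r : Fin B → ℝ` with `∑ i, r i = N`, the expected maximum of the `B` independent
exponential batch recovery times with rates `λ ⬝ r i` is at least `(B/(N λ)) ⬝ H_B`,
where `H_B` is the `B`-th harmonic number, with equality for the balanced assignment
in which every entry of `r` equals `N / B`. -/
theorem expected_computing_time_lower_bound (B : ℕ) (hB : 1 ≤ B)
    (lam N : ℝ) (hlam : 0 < lam) (r : Fin B → ℝ)
    (hr : ∀ i, 0 < r i) (hsum : ∑ i, r i = N) :
    ((B : ℝ) / (N * lam) * ∑ k ∈ Finset.Icc 1 B, (1 : ℝ) / k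
        ≤ ∫ x, (⨆ i, x i) ∂(Measure.pi fun i => expMeasure (lam * r i)))
    ∧
    ((∀ i, r i = N / B) →
      ∫ x, (⨆ i, x i) ∂(Measure.pi fun i => expMeasure (lam * r i))
        = (B : ℝ) / (N * lam) * ∑ k ∈ Finset.Icc 1 B, (1 : ℝ) / k) := by
  have : NeZero B := ⟨by omega⟩
  have hN : 0 < N := hsum ▸ sum_pos (fun i _ => hr i) univ_nonempty
  have hrate : ∀ i, 0 < lam * r i := fun i => mul_pos hlam (hr i)
  -- `c` is the common rate of the balanced assignment
  set c := lam * N / B with hc_def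
  have hc : 0 < c := by positivity
  have hmean : (∑ i, lam * r i) / Fintype.card (Fin B) = c := by
    rw [← mul_sum, hsum, Fintype.card_fin]
  rw [integral_iSup_pi_expMeasure hrate,
    show (B : ℝ) / (N * lam) * ∑ k ∈ Icc 1 B, (1 : ℝ) / k = (∑ k ∈ Icc 1 B, (1 : ℝ) / k) / c by
      rw [hc_def]; field_simp,
    ← integral_one_sub_one_sub_exp_neg_mul_pow hc B]
  refine ⟨setIntegral_mono_on (integrableOn_one_sub_one_sub_exp_neg_mul_pow hc B)
    (integrableOn_one_sub_prod_one_sub_exp_neg_mul hrate) measurableSet_Ioi fun t ht => ?_,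
    fun hbalanced => setIntegral_congr_fun measurableSet_Ioi fun t _ => ?_⟩
  · have h := prod_one_sub_exp_neg_mul_le (fun i => (hrate i).le) (le_of_lt ht)
    rw [hmean, Fintype.card_fin] at h
    linarith
  · simp only [hbalanced, prod_const, card_univ, Fintype.card_fin]
    rw [hc_def, mul_div_assoc]
end

section
/- Let X₂, X₃, X₄, X₅, X₆ be i.i.d. exponential random variables with rate λ > 0 (formally, coordinates of the product on (Fin 5 → ℝ) of five copies of the exponential distribution with rate λ). Define T_b = min( max(X₃, min(X₅, X₆)), max(max(X₂, X₄), min(X₅, X₆)) ) for the partially overlapping batching policy (b) and T_c = max( min(X₃, X₄), min(X₅, X₆) ) for the non-overlapping balanced batching policy (c). Then E[T_c] < E[T_b]. -/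
/-!
Writing `M = min(X₅, X₆)`, distributivity gives `T_b = max(min(X₃, max(X₂, X₄)), M)`,
which dominates `T_c = max(min(X₃, X₄), M)` pointwise since `max(X₂, X₄) ≥ X₄`. The
inequality is strict on the box `X₂, X₃ > t ≥ X₄, X₅`, which has positive probability as
soon as both `X ≤ t` and `X > t` do (for the exponential law: any `t > 0`). So
`E[T_b] - E[T_c]` is the integral of a nonnegative function that is positive on a set of
positive measure.
-/

open MeasureTheory ProbabilityTheory Set

theorem integral_lt_integral_of_ae_le_of_measure_setOf_lt_ne_zero {α : Type*}
    [MeasurableSpace α] {μ : Measure α} {f g : α → ℝ} (hf : Integrable f μ)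
    (hg : Integrable g μ) (hle : f ≤ᵐ[μ] g) (hlt : μ {x | f x < g x} ≠ 0) :
    ∫ x, f x ∂μ < ∫ x, g x ∂μ := by
  rw [← sub_pos, ← integral_sub hg hf, integral_pos_iff_support_of_nonneg_ae
    (hle.mono fun x hx => sub_nonneg.2 hx) (hg.sub hf)]
  exact pos_iff_ne_zero.2 (mt (measure_mono_null fun x hx => (sub_pos.2 hx).ne') hlt)

-- The coordinates `x 0, …, x 4` are the service times `X₂, …, X₆`.
def overlappingBatchTime (x : Fin 5 → ℝ) : ℝ :=
  min (max (x 1) (min (x 3) (x 4))) (max (max (x 0) (x 2)) (min (x 3) (x 4)))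

def balancedBatchTime (x : Fin 5 → ℝ) : ℝ :=
  max (min (x 1) (x 2)) (min (x 3) (x 4))

theorem overlappingBatchTime_eq (x : Fin 5 → ℝ) :
    overlappingBatchTime x = max (min (x 1) (max (x 0) (x 2))) (min (x 3) (x 4)) :=
  (max_min_distrib_right ..).symm

theorem balancedBatchTime_le_overlappingBatchTime (x : Fin 5 → ℝ) :
    balancedBatchTime x ≤ overlappingBatchTime x := by
  rw [overlappingBatchTime_eq, balancedBatchTime]
  gcongr
  exact le_max_right _ _

theorem balancedBatchTime_lt_overlappingBatchTime {t : ℝ} {x : Fin 5 → ℝ} (h0 : t < x 0)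
    (h1 : t < x 1) (h2 : x 2 ≤ t) (h3 : x 3 ≤ t) :
    balancedBatchTime x < overlappingBatchTime x := by
  rw [overlappingBatchTime_eq]
  calc balancedBatchTime x ≤ t :=
        max_le ((min_le_right _ _).trans h2) ((min_le_left _ _).trans h3)
    _ < _ := lt_max_of_lt_left (lt_min h1 (lt_max_of_lt_left h0))

section IID

variable {ν : Measure ℝ} [IsFiniteMeasure ν]

theorem integrable_overlappingBatchTime (hν : Integrable id ν) :
    Integrable overlappingBatchTime (Measure.pi fun _ : Fin 5 => ν) := by
  have hX (i : Fin 5) : Integrable (fun x : Fin 5 → ℝ => x i) (Measure.pi fun _ => ν) :=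
    integrable_eval hν
  exact ((hX 1).sup ((hX 3).inf (hX 4))).inf (((hX 0).sup (hX 2)).sup ((hX 3).inf (hX 4)))

theorem integrable_balancedBatchTime (hν : Integrable id ν) :
    Integrable balancedBatchTime (Measure.pi fun _ : Fin 5 => ν) := by
  have hX (i : Fin 5) : Integrable (fun x : Fin 5 → ℝ => x i) (Measure.pi fun _ => ν) :=
    integrable_eval hν
  exact ((hX 1).inf (hX 2)).sup ((hX 3).inf (hX 4))

theorem measure_balancedBatchTime_lt_overlappingBatchTime_ne_zero {t : ℝ}
    (hlo : ν (Iic t) ≠ 0) (hhi : ν (Ioi t) ≠ 0) :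
    Measure.pi (fun _ : Fin 5 => ν) {x | balancedBatchTime x < overlappingBatchTime x} ≠ 0 := by
  let box : Fin 5 → Set ℝ := ![Ioi t, Ioi t, Iic t, Iic t, univ]
  have hbox : Measure.pi (fun _ : Fin 5 => ν) (univ.pi box) ≠ 0 := by
    rw [Measure.pi_pi, Fin.prod_univ_five]
    have hν : ν ≠ 0 := by rintro rfl; simp at hlo
    simp [box, hlo, hhi, hν]
  refine fun h => hbox (measure_mono_null (fun x hx => ?_) h)
  have hx (i : Fin 5) : x i ∈ box i := hx i (mem_univ i)
  exact balancedBatchTime_lt_overlappingBatchTime (hx 0) (hx 1) (hx 2) (hx 3)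

theorem integral_balancedBatchTime_lt_integral_overlappingBatchTime (hν : Integrable id ν)
    {t : ℝ} (hlo : ν (Iic t) ≠ 0) (hhi : ν (Ioi t) ≠ 0) :
    ∫ x, balancedBatchTime x ∂Measure.pi (fun _ : Fin 5 => ν)
      < ∫ x, overlappingBatchTime x ∂Measure.pi (fun _ : Fin 5 => ν) :=
  integral_lt_integral_of_ae_le_of_measure_setOf_lt_ne_zero (integrable_balancedBatchTime hν)
    (integrable_overlappingBatchTime hν) (ae_of_all _ balancedBatchTime_le_overlappingBatchTime)
    (measure_balancedBatchTime_lt_overlappingBatchTime_ne_zero hlo hhi)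

end IID

theorem integrable_id_expMeasure {r : ℝ} (hr : 0 < r) : Integrable id (expMeasure r) := by
  have hdens : expMeasure r = volume.withDensity (exponentialPDF r) := rfl
  rw [hdens, integrable_withDensity_iff (f := exponentialPDF r)
    (by unfold exponentialPDF; fun_prop) (ae_of_all _ fun _ => ENNReal.ofReal_lt_top)]
  have hmoment : IntegrableOn (fun x : ℝ => x * (r * Real.exp (-(r * x)))) (Ioi 0) := by
    have := (integrableOn_rpow_mul_exp_neg_mul_rpow (s := 1) (p := 1) (by norm_num)
      one_pos hr).const_mul r
    refine IntegrableOn.congr_fun this (fun x _ => ?_) measurableSet_Ioi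
    simp only [Real.rpow_one, neg_mul]
    ring
  rw [← integrableOn_univ, ← Iio_union_Ici (a := 0), integrableOn_union,
    integrableOn_Ici_iff_integrableOn_Ioi]
  refine ⟨integrableOn_zero.congr_fun (fun x hx => ?_) measurableSet_Iio,
    hmoment.congr_fun (fun x hx => ?_) measurableSet_Ioi⟩
  · simp [exponentialPDF_of_neg (mem_Iio.1 hx)]
  · simp [exponentialPDF_of_nonneg (mem_Ioi.1 hx).le, hr.le, Real.exp_nonneg]

theorem expMeasure_Iic_ne_zero {r t : ℝ} (hr : 0 < r) (ht : 0 < t) :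
    expMeasure r (Iic t) ≠ 0 := by
  have := isProbabilityMeasure_expMeasure hr
  rw [← ofReal_cdf, cdf_expMeasure_eq hr, if_pos ht.le, ne_eq, ENNReal.ofReal_eq_zero, not_le,
    sub_pos, Real.exp_lt_one_iff, neg_lt_zero]
  positivity

theorem expMeasure_Ioi_ne_zero {r : ℝ} (hr : 0 < r) (t : ℝ) : expMeasure r (Ioi t) ≠ 0 := by
  have := isProbabilityMeasure_expMeasure hr
  have hcdf : cdf (expMeasure r) t < 1 := by
    rw [cdf_expMeasure_eq hr]
    split_ifs
    · linarith [Real.exp_pos (-(r * t))]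
    · exact one_pos
  rw [← compl_Iic, prob_compl_eq_one_sub measurableSet_Iic, ← ofReal_cdf]
  exact (tsub_pos_of_lt (ENNReal.ofReal_lt_one.2 hcdf)).ne'

/-- Six-worker example: with `X₂, …, X₆` i.i.d. exponential with rate `λ > 0`
(coordinates `x 0, …, x 4`), the expected overall result generating time of the
non-overlapping balanced batching policy (c), `T_c = max(min(X₃,X₄), min(X₅,X₆))`,
is strictly smaller than that of the partially overlapping batching policy (b),
`T_b = min(max(X₃, min(X₅,X₆)), max(max(X₂,X₄), min(X₅,X₆)))`. -/
theorem nonoverlapping_beats_overlapping (lam : ℝ) (hlam : 0 < lam) :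
    ∫ x : Fin 5 → ℝ, max (min (x 1) (x 2)) (min (x 3) (x 4))
        ∂(Measure.pi fun _ : Fin 5 => expMeasure lam)
      < ∫ x : Fin 5 → ℝ,
        min (max (x 1) (min (x 3) (x 4))) (max (max (x 0) (x 2)) (min (x 3) (x 4)))
        ∂(Measure.pi fun _ : Fin 5 => expMeasure lam) := by
  have := isProbabilityMeasure_expMeasure hlam
  exact integral_balancedBatchTime_lt_integral_overlappingBatchTime
    (integrable_id_expMeasure hlam) (expMeasure_Iic_ne_zero hlam one_pos)
    (expMeasure_Ioi_ne_zero hlam 1)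
end

section
/- Let X₂, X₃, X₄, X₅, X₆ be i.i.d. exponential random variables with rate λ > 0 (formally, coordinates of the product on (Fin 5 → ℝ) of five copies of the exponential distribution with rate λ). Define T_a = min( max(X₃, X₅), max(X₂, X₄, X₆) ), T_b = min( max(X₃, min(X₅, X₆)), max(max(X₂, X₄), min(X₅, X₆)) ), and T_c = max( min(X₃, X₄), min(X₅, X₆) ). Then E[T_c] < E[T_b] < E[T_a]: the balanced assignment of non-overlapping batches achieves the strictly smallest expected computing time among the three batching policies of the six-worker example. -/
/-!
The three completion times are ordered pointwise: with `m = min X₅ X₆`, one has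
`T_c = max m (min X₃ X₄) ≤ max m (min X₃ (max X₂ X₄)) = T_b`, and `T_b ≤ T_a` because `m ≤ X₅`
and `m ≤ X₆`. Each inequality is strict on a box of positive probability (all coordinates
integrable because the exponential law has finite mean), so integrating preserves strictness.
-/

open MeasureTheory ProbabilityTheory Real Set

section Exponential

variable {lam : ℝ}

lemma expMeasure_Iic (hlam : 0 < lam) {t : ℝ} (ht : 0 ≤ t) :
    expMeasure lam (Iic t) = ENNReal.ofReal (1 - exp (-(lam * t))) := by
  have := isProbabilityMeasure_expMeasure hlam
  rw [← ofReal_cdf, cdf_expMeasure_eq hlam, if_pos ht]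

lemma expMeasure_Ioi (hlam : 0 < lam) {t : ℝ} (ht : 0 ≤ t) :
    expMeasure lam (Ioi t) = ENNReal.ofReal (exp (-(lam * t))) := by
  have := isProbabilityMeasure_expMeasure hlam
  have hle : exp (-(lam * t)) ≤ 1 := exp_le_one_iff.2 (by nlinarith)
  rw [← compl_Iic, prob_compl_eq_one_sub measurableSet_Iic, expMeasure_Iic hlam ht,
    ← ENNReal.ofReal_one, ← ENNReal.ofReal_sub _ (sub_nonneg.2 hle), sub_sub_cancel]

lemma expMeasure_Ioc_pos (hlam : 0 < lam) {a b : ℝ} (ha : 0 ≤ a) (hab : a < b) :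
    0 < expMeasure lam (Ioc a b) := by
  have := isProbabilityMeasure_expMeasure hlam
  rw [← measure_cdf (expMeasure lam), StieltjesFunction.measure_Ioc,
    cdf_expMeasure_eq hlam, cdf_expMeasure_eq hlam, if_pos ha, if_pos (ha.trans hab.le),
    ENNReal.ofReal_pos, sub_pos, sub_lt_sub_iff_left, exp_lt_exp]
  nlinarith

lemma ae_nonneg_expMeasure_s14 (hlam : 0 < lam) : ∀ᵐ x ∂expMeasure lam, 0 ≤ x := by
  refine ae_iff.2 (measure_mono_null (t := Iic 0) (fun x hx => le_of_lt (not_le.1 hx)) ?_)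
  simp [expMeasure_Iic hlam le_rfl]

-- The layer-cake formula `E[X] = ∫₀^∞ P(X > t) dt` reduces the mean to `∫₀^∞ exp (-λt) dt`.
lemma integrable_id_expMeasure_s14 (hlam : 0 < lam) : Integrable id (expMeasure lam) := by
  have hnonneg : 0 ≤ᵐ[expMeasure lam] id := ae_nonneg_expMeasure_s14 hlam
  refine ⟨aestronglyMeasurable_id, (hasFiniteIntegral_iff_ofReal hnonneg).2 ?_⟩
  rw [lintegral_eq_lintegral_meas_lt _ hnonneg aemeasurable_id]
  change ∫⁻ t in Ioi 0, expMeasure lam (Ioi t) < ⊤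
  rw [setLIntegral_congr_fun measurableSet_Ioi fun t ht => expMeasure_Ioi hlam (le_of_lt ht)]
  have hint : IntegrableOn (fun t => exp (-(lam * t))) (Ioi 0) := by
    simpa only [neg_mul] using exp_neg_integrableOn_Ioi 0 hlam
  rw [← ofReal_integral_eq_lintegral_ofReal hint (ae_of_all _ fun t => (exp_pos _).le)]
  exact ENNReal.ofReal_lt_top

end Exponential

lemma integral_lt_integral_of_ae_le_of_lt_on {α : Type*} [MeasurableSpace α] {μ : Measure α}
    {f g : α → ℝ} (hf : Integrable f μ) (hg : Integrable g μ) (hle : f ≤ᵐ[μ] g) {s : Set α}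
    (hs : μ s ≠ 0) (hlt : ∀ x ∈ s, f x < g x) :
    ∫ x, f x ∂μ < ∫ x, g x ∂μ := by
  rw [← sub_pos, ← integral_sub hg hf,
    integral_pos_iff_support_of_nonneg_ae (hle.mono fun x => sub_nonneg.2) (hg.sub hf)]
  exact pos_iff_ne_zero.2 (mt (measure_mono_null fun x hx => (sub_pos.2 (hlt x hx)).ne') hs)

section ExponentialPi

variable {ι : Type*} [Fintype ι] {lam : ℝ}

lemma integrable_eval_pi_expMeasure (hlam : 0 < lam) (i : ι) :
    Integrable (fun x : ι → ℝ => x i) (Measure.pi fun _ => expMeasure lam) :=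
  have := isProbabilityMeasure_expMeasure hlam
  integrable_eval (integrable_id_expMeasure_s14 hlam)

lemma pi_expMeasure_unitBox_ne_zero (hlam : 0 < lam) {a : ι → ℝ} (ha : ∀ i, 0 ≤ a i) :
    Measure.pi (fun _ => expMeasure lam) (univ.pi fun i => Ioc (a i) (a i + 1)) ≠ 0 := by
  have := isProbabilityMeasure_expMeasure hlam
  rw [Measure.pi_pi, Finset.prod_ne_zero_iff]
  exact fun i _ => (expMeasure_Ioc_pos hlam (ha i) (lt_add_one _)).ne'

end ExponentialPi

-- Coordinate `x i` is the service time `X_{i+2}` of worker `W_{i+2}`.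
def cyclicTime (x : Fin 5 → ℝ) : ℝ :=
  min (max (x 1) (x 3)) (max (x 0) (max (x 2) (x 4)))

def overlappingTime (x : Fin 5 → ℝ) : ℝ :=
  min (max (x 1) (min (x 3) (x 4))) (max (max (x 0) (x 2)) (min (x 3) (x 4)))

def balancedTime (x : Fin 5 → ℝ) : ℝ :=
  max (min (x 1) (x 2)) (min (x 3) (x 4))

section Policies

variable {μ : Measure (Fin 5 → ℝ)}

lemma integrable_cyclicTime (hX : ∀ i, Integrable (fun x => x i) μ) : Integrable cyclicTime μ :=
  ((hX 1).sup (hX 3)).inf ((hX 0).sup ((hX 2).sup (hX 4)))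

lemma integrable_overlappingTime (hX : ∀ i, Integrable (fun x => x i) μ) :
    Integrable overlappingTime μ :=
  ((hX 1).sup ((hX 3).inf (hX 4))).inf (((hX 0).sup (hX 2)).sup ((hX 3).inf (hX 4)))

lemma integrable_balancedTime (hX : ∀ i, Integrable (fun x => x i) μ) :
    Integrable balancedTime μ :=
  ((hX 1).inf (hX 2)).sup ((hX 3).inf (hX 4))

end Policies

lemma balancedTime_le_overlappingTime (x : Fin 5 → ℝ) : balancedTime x ≤ overlappingTime x := by
  unfold balancedTime overlappingTime; grind

lemma overlappingTime_le_cyclicTime (x : Fin 5 → ℝ) : overlappingTime x ≤ cyclicTime x := by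
  unfold overlappingTime cyclicTime; grind

lemma balancedTime_lt_overlappingTime {x : Fin 5 → ℝ} (h32 : x 3 < x 2) (h21 : x 2 < x 1)
    (h20 : x 2 < x 0) : balancedTime x < overlappingTime x := by
  unfold balancedTime overlappingTime; grind

lemma overlappingTime_lt_cyclicTime {x : Fin 5 → ℝ} (h41 : x 4 < x 1) (h10 : x 1 < x 0)
    (h13 : x 1 < x 3) : overlappingTime x < cyclicTime x := by
  unfold overlappingTime cyclicTime; grind

/-- Six-worker example: with `X₂, …, X₆` i.i.d. exponential with rate `λ > 0`
(coordinates `x 0, …, x 4`), the expected overall computing times of the three batching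
policies of Figure 4 satisfy `E[T_c] < E[T_b] < E[T_a]`, where
`T_a = min(max(X₃,X₅), max(X₂,X₄,X₆))` (cyclic),
`T_b = min(max(X₃, min(X₅,X₆)), max(max(X₂,X₄), min(X₅,X₆)))` (partially overlapping), and
`T_c = max(min(X₃,X₄), min(X₅,X₆))` (non-overlapping balanced): the balanced assignment of
non-overlapping batches achieves the strictly smallest expected computing time. -/
theorem balanced_beats_overlapping_beats_cyclic (lam : ℝ) (hlam : 0 < lam) :
    (∫ x : Fin 5 → ℝ, max (min (x 1) (x 2)) (min (x 3) (x 4))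
        ∂(Measure.pi fun _ : Fin 5 => expMeasure lam)
      < ∫ x : Fin 5 → ℝ,
        min (max (x 1) (min (x 3) (x 4))) (max (max (x 0) (x 2)) (min (x 3) (x 4)))
        ∂(Measure.pi fun _ : Fin 5 => expMeasure lam))
    ∧
    (∫ x : Fin 5 → ℝ,
        min (max (x 1) (min (x 3) (x 4))) (max (max (x 0) (x 2)) (min (x 3) (x 4)))
        ∂(Measure.pi fun _ : Fin 5 => expMeasure lam)
      < ∫ x : Fin 5 → ℝ,
        min (max (x 1) (x 3)) (max (x 0) (max (x 2) (x 4)))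
        ∂(Measure.pi fun _ : Fin 5 => expMeasure lam)) := by
  change ∫ x, balancedTime x ∂_ < ∫ x, overlappingTime x ∂_ ∧
    ∫ x, overlappingTime x ∂_ < ∫ x, cyclicTime x ∂_
  have hX := integrable_eval_pi_expMeasure (ι := Fin 5) hlam
  constructor
  · refine integral_lt_integral_of_ae_le_of_lt_on (integrable_balancedTime hX)
      (integrable_overlappingTime hX) (ae_of_all _ balancedTime_le_overlappingTime)
      (pi_expMeasure_unitBox_ne_zero hlam (a := ![2, 2, 1, 0, 0]) (by simp [Fin.forall_fin_succ]))
      fun x hx => ?_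
    simp [Fin.forall_fin_succ] at hx
    apply balancedTime_lt_overlappingTime <;> linarith
  · refine integral_lt_integral_of_ae_le_of_lt_on (integrable_overlappingTime hX)
      (integrable_cyclicTime hX) (ae_of_all _ overlappingTime_le_cyclicTime)
      (pi_expMeasure_unitBox_ne_zero hlam (a := ![2, 1, 0, 2, 0]) (by simp [Fin.forall_fin_succ]))
      fun x hx => ?_
    simp [Fin.forall_fin_succ] at hx
    apply overlappingTime_lt_cyclicTime <;> linarith
end
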